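/- Let k be a natural number and let M be a (2^k)×(2^k) complex matrix with trace M = 0. Then there exists a (2^k)×(2^k) unitary matrix U such that every diagonal entry of U * M * Uᴴ is zero. -/

import Mathlib

/-!
Call a matrix unitarily equidiagonalizable if a unitary conjugate of it has constant diagonal,
necessarily equal to trace / size. Every `2 × 2` matrix is: a unitary diagonalizing its Hermitian
part `N + Nᴴ` leaves a matrix with `P 1 0 = -conj (P 0 1)`, and a rotation
`(1, w; -conj w, 1) / √2`, with `w` a phase making `conj w * P 0 1` real, then averages the
diagonal. The property passes from `m` and `o` to `m × o`: equidiagonalizing the `m × m` diagonal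
blocks makes the diagonal constant on each of them, after which the `o × o` diagonal blocks of the
transposed decomposition all have the same trace, and equidiagonalizing those finishes. So it
holds in dimension `2 ^ k`, and for a traceless matrix the constant diagonal is zero.
-/

open scoped Matrix ComplexConjugate

theorem RCLike.exists_norm_eq_one_conj_mul_eq_norm {𝕜 : Type*} [RCLike 𝕜] (b : 𝕜) :
    ∃ w : 𝕜, ‖w‖ = 1 ∧ conj w * b = ‖b‖ := by
  by_cases hb : b = 0
  · exact ⟨1, by simp, by simp [hb]⟩
  · refine ⟨b / ‖b‖, by simp [norm_div, hb], ?_⟩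
    have hb' : (‖b‖ : 𝕜) ≠ 0 := by simpa using hb
    rw [map_div₀, RCLike.conj_ofReal, div_mul_eq_mul_div, mul_comm, RCLike.mul_conj]
    field_simp

namespace Matrix

section Blocks

variable {α : Type*} {m n o : Type*} [Fintype m] [Fintype n] [Fintype o]

theorem trace_reindex [AddCommMonoid α] (e : m ≃ n) (M : Matrix m m α) :
    (reindex e e M).trace = M.trace :=
  e.symm.sum_comp fun j => M j j

theorem trace_eq_sum_trace_blockDiag [AddCommMonoid α] (M : Matrix (m × o) (m × o) α) :
    M.trace = ∑ k, (blockDiag M k).trace :=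
  Fintype.sum_prod_type_right _

variable [NonUnitalNonAssocSemiring α] [DecidableEq o]

theorem blockDiag_blockDiagonal_mul (A : o → Matrix m m α) (M : Matrix (m × o) (m × o) α)
    (k : o) : blockDiag (blockDiagonal A * M) k = A k * blockDiag M k := by
  ext i j
  simp [blockDiag_apply, mul_apply, blockDiagonal_apply, Fintype.sum_prod_type]

theorem blockDiag_mul_blockDiagonal (M : Matrix (m × o) (m × o) α) (B : o → Matrix m m α)
    (k : o) : blockDiag (M * blockDiagonal B) k = blockDiag M k * B k := by
  ext i j
  simp [blockDiag_apply, mul_apply, blockDiagonal_apply, Fintype.sum_prod_type]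

end Blocks

section UnitaryGroup

variable {α : Type*} [CommRing α] [StarRing α] {m n o : Type*} [Fintype m] [DecidableEq m]
  [Fintype n] [DecidableEq n] [Fintype o] [DecidableEq o]

theorem trace_mul_mul_conjTranspose_of_mem_unitaryGroup {U : Matrix n n α}
    (hU : U ∈ unitaryGroup n α) (M : Matrix n n α) : (U * M * Uᴴ).trace = M.trace := by
  rw [trace_mul_cycle, ← star_eq_conjTranspose, mem_unitaryGroup_iff'.mp hU, Matrix.one_mul]

theorem reindex_mem_unitaryGroup (e : m ≃ n) {U : Matrix m m α} (hU : U ∈ unitaryGroup m α) :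
    reindex e e U ∈ unitaryGroup n α := by
  rw [mem_unitaryGroup_iff, star_eq_conjTranspose, conjTranspose_reindex, reindex_apply,
    reindex_apply, submatrix_mul_equiv, ← star_eq_conjTranspose, mem_unitaryGroup_iff.mp hU,
    submatrix_one_equiv]

theorem blockDiagonal_mem_unitaryGroup {U : o → Matrix m m α}
    (hU : ∀ k, U k ∈ unitaryGroup m α) : blockDiagonal U ∈ unitaryGroup (m × o) α := by
  rw [mem_unitaryGroup_iff, star_eq_conjTranspose, blockDiagonal_conjTranspose,
    ← blockDiagonal_mul, ← blockDiagonal_one]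
  exact congrArg blockDiagonal (funext fun k => mem_unitaryGroup_iff.mp (hU k))

end UnitaryGroup

variable {𝕜 : Type*} [RCLike 𝕜] {m n o : Type*} [Fintype m] [DecidableEq m] [Fintype n]
  [DecidableEq n] [Fintype o] [DecidableEq o]

def IsUnitarilyEquidiagonalizable (M : Matrix n n 𝕜) : Prop :=
  ∃ U ∈ unitaryGroup n 𝕜, ∀ i, (U * M * Uᴴ) i i = M.trace / Fintype.card n

theorem IsUnitarilyEquidiagonalizable.of_unitary_conj {U : Matrix n n 𝕜}
    (hU : U ∈ unitaryGroup n 𝕜) {M : Matrix n n 𝕜}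
    (h : (U * M * Uᴴ).IsUnitarilyEquidiagonalizable) : M.IsUnitarilyEquidiagonalizable := by
  obtain ⟨V, hV, hdiag⟩ := h
  refine ⟨V * U, mul_mem hV hU, fun i => ?_⟩
  rw [← trace_mul_mul_conjTranspose_of_mem_unitaryGroup hU M, ← hdiag i, conjTranspose_mul]
  simp only [Matrix.mul_assoc]

theorem IsUnitarilyEquidiagonalizable.reindex (e : m ≃ n) {M : Matrix m m 𝕜}
    (h : M.IsUnitarilyEquidiagonalizable) :
    (Matrix.reindex e e M).IsUnitarilyEquidiagonalizable := by
  obtain ⟨U, hU, hdiag⟩ := h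
  refine ⟨Matrix.reindex e e U, reindex_mem_unitaryGroup e hU, fun i => ?_⟩
  rw [trace_reindex, ← Fintype.card_congr e, ← hdiag (e.symm i), conjTranspose_reindex]
  simp only [reindex_apply, submatrix_mul_equiv, submatrix_apply]

theorem IsUnitarilyEquidiagonalizable.of_unique [Unique n] (M : Matrix n n 𝕜) :
    M.IsUnitarilyEquidiagonalizable :=
  ⟨1, one_mem _, fun i => by simp [trace, Unique.eq_default i]⟩

theorem smul_mem_unitaryGroup_fin_two {c w : 𝕜} (hc : c * conj c = 2⁻¹) (hw : w * conj w = 1) :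
    c • !![1, w; -conj w, 1] ∈ unitaryGroup (Fin 2) 𝕜 := by
  rw [mem_unitaryGroup_iff, star_eq_conjTranspose]
  ext i j
  fin_cases i <;> fin_cases j <;> simp [mul_apply, Fin.sum_univ_two]
  · linear_combination (1 + w * conj w) * hc + 2⁻¹ * hw
  · ring
  · ring
  · linear_combination (1 + w * conj w) * hc + 2⁻¹ * hw

theorem isUnitarilyEquidiagonalizable_of_isDiag_add_conjTranspose
    {P : Matrix (Fin 2) (Fin 2) 𝕜} (hP : (P + Pᴴ).IsDiag) : P.IsUnitarilyEquidiagonalizable := by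
  have hP10 : P 1 0 = -conj (P 0 1) := by
    have h10 := hP (show (1 : Fin 2) ≠ 0 by decide)
    simp only [add_apply, conjTranspose_apply, RCLike.star_def] at h10
    linear_combination h10
  obtain ⟨w, hw, hwP⟩ := RCLike.exists_norm_eq_one_conj_mul_eq_norm (P 0 1)
  have hww : w * conj w = 1 := by rw [RCLike.mul_conj, hw]; simp
  have hcross : conj w * P 0 1 = w * conj (P 0 1) := by
    rw [hwP, ← RCLike.conj_conj w, ← map_mul, hwP, RCLike.conj_ofReal]
  obtain ⟨c, hc⟩ : ∃ c : 𝕜, c * conj c = 2⁻¹ := by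
    refine ⟨((√2)⁻¹ : ℝ), ?_⟩
    rw [RCLike.conj_ofReal, ← RCLike.ofReal_mul, ← mul_inv, Real.mul_self_sqrt zero_le_two,
      RCLike.ofReal_inv, RCLike.ofReal_ofNat]
  refine ⟨_, smul_mem_unitaryGroup_fin_two hc hww, fun i => ?_⟩
  fin_cases i <;> simp [mul_apply, Fin.sum_univ_two, trace_fin_two, hP10, vecMul, dotProduct]
  · linear_combination (P 0 0 + P 1 1) * hc + c * conj c * (hcross + P 1 1 * hww)
  · linear_combination (P 0 0 + P 1 1) * hc - c * conj c * (hcross - P 0 0 * hww)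

theorem isUnitarilyEquidiagonalizable_fin_two (N : Matrix (Fin 2) (Fin 2) 𝕜) :
    N.IsUnitarilyEquidiagonalizable := by
  have hH := isHermitian_add_transpose_self N
  set U := star hH.eigenvectorUnitary with hU
  have hdiag : (Unitary.conjStarAlgAut 𝕜 _ U N + star (Unitary.conjStarAlgAut 𝕜 _ U N)).IsDiag := by
    rw [← map_star, ← map_add, star_eq_conjTranspose N, hU,
      hH.conjStarAlgAut_star_eigenvectorUnitary]
    exact isDiag_diagonal _
  simp only [Unitary.conjStarAlgAut_apply, star_eq_conjTranspose] at hdiag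
  exact .of_unitary_conj U.2 (isUnitarilyEquidiagonalizable_of_isDiag_add_conjTranspose hdiag)

theorem exists_unitary_diag_eq_trace_blockDiag_div
    (h : ∀ N : Matrix m m 𝕜, N.IsUnitarilyEquidiagonalizable) (M : Matrix (m × o) (m × o) 𝕜) :
    ∃ U ∈ unitaryGroup (m × o) 𝕜,
      ∀ i k, (U * M * Uᴴ) (i, k) (i, k) = (blockDiag M k).trace / Fintype.card m := by
  choose W hW hdiag using fun k => h (blockDiag M k)
  refine ⟨blockDiagonal W, blockDiagonal_mem_unitaryGroup hW, fun i k => ?_⟩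
  rw [← hdiag k i, ← blockDiag_blockDiagonal_mul,
    ← blockDiag_mul_blockDiagonal (B := fun k => (W k)ᴴ), blockDiagonal_conjTranspose]
  rfl

theorem isUnitarilyEquidiagonalizable_prod
    (hm : ∀ N : Matrix m m 𝕜, N.IsUnitarilyEquidiagonalizable)
    (ho : ∀ N : Matrix o o 𝕜, N.IsUnitarilyEquidiagonalizable) (M : Matrix (m × o) (m × o) 𝕜) :
    M.IsUnitarilyEquidiagonalizable := by
  obtain ⟨U, hU, hdiag⟩ := exists_unitary_diag_eq_trace_blockDiag_div hm M
  refine .of_unitary_conj hU ?_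
  set e := Equiv.prodComm m o
  have htrace : ∀ i, (blockDiag (Matrix.reindex e e (U * M * Uᴴ)) i).trace =
      M.trace / Fintype.card m := by
    intro i
    rw [trace_eq_sum_trace_blockDiag, Finset.sum_div]
    exact Finset.sum_congr rfl fun k _ => hdiag i k
  obtain ⟨V, hV, hVdiag⟩ :=
    exists_unitary_diag_eq_trace_blockDiag_div ho (Matrix.reindex e e (U * M * Uᴴ))
  have hswap : (Matrix.reindex e e (U * M * Uᴴ)).IsUnitarilyEquidiagonalizable := by
    refine ⟨V, hV, fun ⟨k, i⟩ => ?_⟩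
    rw [hVdiag, htrace, trace_reindex, trace_mul_mul_conjTranspose_of_mem_unitaryGroup hU,
      Fintype.card_prod, Nat.cast_mul, div_div, mul_comm]
  simpa using hswap.reindex e.symm

theorem isUnitarilyEquidiagonalizable_pow_two (k : ℕ)
    (M : Matrix (Fin (2 ^ k)) (Fin (2 ^ k)) 𝕜) : M.IsUnitarilyEquidiagonalizable := by
  induction k with
  | zero =>
    have : Unique (Fin (2 ^ 0)) := inferInstanceAs (Unique (Fin 1))
    exact .of_unique M
  | succ k ih =>
    let e : Fin (2 ^ k) × Fin 2 ≃ Fin (2 ^ (k + 1)) :=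
      finProdFinEquiv.trans (finCongr (pow_succ 2 k).symm)
    simpa using (isUnitarilyEquidiagonalizable_prod ih isUnitarilyEquidiagonalizable_fin_two
      (Matrix.reindex e.symm e.symm M)).reindex e

end Matrix

/-- The `2^k`-dimensional zerodiagonalization result: every traceless `2^k × 2^k` complex
matrix can be conjugated by a unitary so that every diagonal entry vanishes. -/
theorem exists_unitary_zerodiagonalize_pow_two (k : ℕ)
    (M : Matrix (Fin (2 ^ k)) (Fin (2 ^ k)) ℂ) (hM : M.trace = 0) :
    ∃ U ∈ Matrix.unitaryGroup (Fin (2 ^ k)) ℂ,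
      ∀ i : Fin (2 ^ k), (U * M * Uᴴ) i i = 0 := by
  obtain ⟨U, hU, hdiag⟩ := Matrix.isUnitarilyEquidiagonalizable_pow_two k M
  exact ⟨U, hU, fun i => by rw [hdiag, hM, zero_div]⟩
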